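/- Let x ∈ C^N, let Δ be an index set achieving the best (s,M)-term approximation of x in the weighted ℓ¹ norm, and decompose each level complement Δ_i^c = Ξ_{i,1} ∪ Ξ_{i,2} ∪ … where Ξ_{i,1} contains the s_i largest entries of P_{Δ_i^c} x in level i, Ξ_{i,2} the next s_i largest, etc. Set Ξ^{(k)} = ∪_{i=1}^r Ξ_{i,k}. If A has RIPL constant δ_{s,M} < 1, then for any e ∈ C^m, ‖A P_{(Δ ∪ Ξ^{(1)})^c} x + e‖₂ ≤ (√2/√ξ) σ_{s,M}(x)_{ℓ¹_w} + ‖e‖₂, where ξ = min_i (w^{(i)})² s_i and σ_{s,M}(x)_{ℓ¹_w} = inf{‖x − z‖_{ℓ¹_w} : z is (s,M)-sparse}. -/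

import Mathlib

noncomputable section

open scoped BigOperators Classical

namespace SIL

/-- The index set of level `k` (0-indexed): indices `i` with `M k ≤ i < M (k+1)`. -/
def level (N : ℕ) (M : ℕ → ℕ) (k : ℕ) : Finset (Fin N) :=
  Finset.univ.filter fun i => M k ≤ (i : ℕ) ∧ (i : ℕ) < M (k + 1)

/-- Validity of the sparsity levels `0 = M₀ < M₁ < ⋯ < M_r = N`. -/
def LevelsOK (N r : ℕ) (M : ℕ → ℕ) : Prop :=
  M 0 = 0 ∧ M r = N ∧ ∀ k < r, M k < M (k + 1)

/-- Support of a vector, as a finset. -/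
def supp {N : ℕ} (x : Fin N → ℂ) : Finset (Fin N) :=
  Finset.univ.filter fun i => x i ≠ 0

/-- An `(s,M)`-sparse index set: at most `s k` indices in each level `k`. -/
def SparseSet (N r : ℕ) (M s : ℕ → ℕ) (Δ : Finset (Fin N)) : Prop :=
  ∀ k < r, (Δ ∩ level N M k).card ≤ s k

/-- An `(s,M)`-sparse in levels vector. -/
def Sparse {N : ℕ} (r : ℕ) (M s : ℕ → ℕ) (x : Fin N → ℂ) : Prop :=
  SparseSet N r M s (supp x)

/-- Squared ℓ² norm. -/
def n2sq {ι : Type*} [Fintype ι] (x : ι → ℂ) : ℝ := ∑ i, ‖x i‖ ^ 2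

/-- ℓ² norm. -/
def n2 {ι : Type*} [Fintype ι] (x : ι → ℂ) : ℝ := Real.sqrt (n2sq x)

/-- Weighted ℓ¹ norm. -/
def wn1 {ι : Type*} [Fintype ι] (w : ι → ℝ) (x : ι → ℂ) : ℝ := ∑ i, w i * ‖x i‖

/-- Standard inner product `⟨x,y⟩ = ∑ xᵢ conj(yᵢ)`. -/
def inr {ι : Type*} [Fintype ι] (x y : ι → ℂ) : ℂ := ∑ i, x i * star (y i)

/-- Coordinate projection onto an index set. -/
def proj {N : ℕ} (Δ : Finset (Fin N)) (x : Fin N → ℂ) : Fin N → ℂ :=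
  fun i => if i ∈ Δ then x i else 0

/-- The two-sided restricted isometry-in-levels inequality with constant `δ`. -/
def RIPBound {m N : ℕ} (A : Matrix (Fin m) (Fin N) ℂ) (r : ℕ) (M s : ℕ → ℕ) (δ : ℝ) : Prop :=
  ∀ x : Fin N → ℂ, Sparse r M s x →
    (1 - δ) * n2sq x ≤ n2sq (A.mulVec x) ∧ n2sq (A.mulVec x) ≤ (1 + δ) * n2sq x

/-- The restricted isometry constant in levels `δ_{s,M}`: the smallest `δ ≥ 0`
satisfying the RIP-in-levels inequalities. -/
def ricl {m N : ℕ} (A : Matrix (Fin m) (Fin N) ℂ) (r : ℕ) (M s : ℕ → ℕ) : ℝ :=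
  sInf {δ : ℝ | 0 ≤ δ ∧ RIPBound A r M s δ}

/-- Best `(s,M)`-term approximation error in the weighted ℓ¹ norm. -/
def bestApprox {N : ℕ} (r : ℕ) (M s : ℕ → ℕ) (w : Fin N → ℝ) (x : Fin N → ℂ) : ℝ :=
  sInf {t : ℝ | ∃ z : Fin N → ℂ, Sparse r M s z ∧ t = wn1 w (x - z)}

/-- `ζ = ∑ₖ (w^{(k)})² sₖ`. -/
def zeta (r : ℕ) (s : ℕ → ℕ) (wl : ℕ → ℝ) : ℝ :=
  ∑ k ∈ Finset.range r, wl k ^ 2 * (s k : ℝ)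

/-- `ξ = minₖ (w^{(k)})² sₖ`. -/
def xiMin (r : ℕ) (s : ℕ → ℕ) (wl : ℕ → ℝ) : ℝ :=
  if h : (Finset.range r).Nonempty then (Finset.range r).inf' h fun k => wl k ^ 2 * (s k : ℝ)
  else 0

/-- `T` is a set collecting, within each level `k`, (the indices of) `s k`
largest-in-absolute-value entries of `z` (or all of the level if it is smaller). -/
def IsTopSet {N : ℕ} (r : ℕ) (M s : ℕ → ℕ) (z : Fin N → ℂ) (T : Finset (Fin N)) : Prop :=
  (∀ k < r, (T ∩ level N M k).card = min (s k) (level N M k).card) ∧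
  (∀ k < r, ∀ i ∈ T ∩ level N M k, ∀ j ∈ level N M k \ T, ‖z j‖ ≤ ‖z i‖)

/-- `h` is a hard thresholding in levels `H_{s,M}(z)` of `z`. -/
def IsThresh {N : ℕ} (r : ℕ) (M s : ℕ → ℕ) (z h : Fin N → ℂ) : Prop :=
  ∃ T : Finset (Fin N), IsTopSet r M s z T ∧ h = proj T z

/-- `X` is a sequence of IHTL iterates with data `(A, y)` and sparsities `(s, M)`. -/
def IHTLSeq {m N : ℕ} (A : Matrix (Fin m) (Fin N) ℂ) (r : ℕ) (M s : ℕ → ℕ)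
    (y : Fin m → ℂ) (X : ℕ → Fin N → ℂ) : Prop :=
  ∀ n, IsThresh r M s (X n + A.conjTranspose.mulVec (y - A.mulVec (X n))) (X (n + 1))

/-- `X` is a sequence of CoSaMPL iterates with data `(A, y)` and sparsities `(s, M)`. -/
def CoSaMPLSeq {m N : ℕ} (A : Matrix (Fin m) (Fin N) ℂ) (r : ℕ) (M s : ℕ → ℕ)
    (y : Fin m → ℂ) (X : ℕ → Fin N → ℂ) : Prop :=
  ∀ n, ∃ (T : Finset (Fin N)) (u : Fin N → ℂ),
    IsTopSet r M (fun k => 2 * s k) (A.conjTranspose.mulVec (y - A.mulVec (X n))) T ∧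
    supp u ⊆ supp (X n) ∪ T ∧
    (∀ z : Fin N → ℂ, supp z ⊆ supp (X n) ∪ T → n2 (y - A.mulVec u) ≤ n2 (y - A.mulVec z)) ∧
    IsThresh r M s u (X (n + 1))


lemma n2sq_nonneg {ι : Type*} [Fintype ι] (x : ι → ℂ) : 0 ≤ n2sq x :=
  Finset.sum_nonneg fun i _ => by positivity

lemma n2_nonneg {ι : Type*} [Fintype ι] (x : ι → ℂ) : 0 ≤ n2 x := Real.sqrt_nonneg _

lemma n2_eq_norm {ι : Type*} [Fintype ι] (x : ι → ℂ) :
    n2 x = ‖(WithLp.equiv 2 (ι → ℂ)).symm x‖ := by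
  rw [EuclideanSpace.norm_eq]; rfl

lemma n2_add_le {ι : Type*} [Fintype ι] (x y : ι → ℂ) : n2 (x + y) ≤ n2 x + n2 y := by
  rw [n2_eq_norm, n2_eq_norm, n2_eq_norm]; exact norm_add_le _ _

lemma n2_sum_le {ι κ : Type*} [Fintype ι] (t : Finset κ) (f : κ → ι → ℂ) :
    n2 (∑ k ∈ t, f k) ≤ ∑ k ∈ t, n2 (f k) := by
  simp only [n2_eq_norm]
  have h : (WithLp.equiv 2 (ι → ℂ)).symm (∑ k ∈ t, f k) =
      ∑ k ∈ t, (WithLp.equiv 2 (ι → ℂ)).symm (f k) :=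
    map_sum (WithLp.linearEquiv 2 ℂ (ι → ℂ)).symm f t
  rw [h]; exact norm_sum_le t _

lemma n2_zero {ι : Type*} [Fintype ι] : n2 (0 : ι → ℂ) = 0 := by simp [n2, n2sq]

-- level lemmas
lemma mem_level {N : ℕ} {M : ℕ → ℕ} {k : ℕ} {j : Fin N} :
    j ∈ level N M k ↔ M k ≤ (j : ℕ) ∧ (j : ℕ) < M (k + 1) := by simp [level]

lemma M_mono {N r : ℕ} {M : ℕ → ℕ} (hM : LevelsOK N r M) {a b : ℕ} (hab : a ≤ b)
    (hbr : b ≤ r) : M a ≤ M b := by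
  induction hab with
  | refl => exact le_refl _
  | @step n h ih => exact (ih (by omega)).trans (hM.2.2 n (by omega)).le

lemma exists_level {N r : ℕ} {M : ℕ → ℕ} (hM : LevelsOK N r M) (j : Fin N) :
    ∃ k < r, j ∈ level N M k := by
  have haux : ∀ t, t ≤ r → (j : ℕ) < M t → ∃ k < t, j ∈ level N M k := by
    intro t
    induction t with
    | zero => intro _ h; rw [hM.1] at h; omega
    | succ n ih =>
      intro hnr hj
      by_cases h : M n ≤ (j : ℕ)
      · exact ⟨n, Nat.lt_succ_self n, mem_level.mpr ⟨h, hj⟩⟩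
      · obtain ⟨k, hk, hk2⟩ := ih (by omega) (by omega)
        exact ⟨k, by omega, hk2⟩
  exact haux r le_rfl (by rw [hM.2.1]; exact j.2)

lemma level_unique {N r : ℕ} {M : ℕ → ℕ} (hM : LevelsOK N r M) {j : Fin N} {k k' : ℕ}
    (hk : k < r) (hk' : k' < r) (h1 : j ∈ level N M k) (h2 : j ∈ level N M k') : k = k' := by
  rw [mem_level] at h1 h2
  rcases lt_trichotomy k k' with h | h | h
  · have := M_mono hM (show k + 1 ≤ k' by omega) (by omega); omega
  · exact h
  · have := M_mono hM (show k' + 1 ≤ k by omega) (by omega); omega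

lemma sum_levels {N r : ℕ} {M : ℕ → ℕ} (hM : LevelsOK N r M) (f : Fin N → ℝ) :
    ∑ j, f j = ∑ k ∈ Finset.range r, ∑ j ∈ level N M k, f j := by
  have huniv : (Finset.univ : Finset (Fin N)) = (Finset.range r).biUnion (level N M) := by
    ext j
    simp only [Finset.mem_univ, Finset.mem_biUnion, Finset.mem_range, true_iff]
    exact exists_level hM j
  rw [huniv, Finset.sum_biUnion]
  intro a ha b hb hab
  rw [Function.onFun, Finset.disjoint_left]
  intro j hja hjb
  exact hab (level_unique hM (Finset.mem_coe.mp ha |> Finset.mem_range.mp)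
    (Finset.mem_coe.mp hb |> Finset.mem_range.mp) hja hjb)

lemma proj_decomp {N r : ℕ} {M : ℕ → ℕ} (hM : LevelsOK N r M) (U : Finset (Fin N))
    (x : Fin N → ℂ) :
    proj U x = ∑ k ∈ Finset.range r, proj (U ∩ level N M k) x := by
  funext j
  obtain ⟨k0, hk0, hjk0⟩ := exists_level hM j
  rw [Finset.sum_apply]
  rw [Finset.sum_eq_single k0]
  · simp [proj, Finset.mem_inter, hjk0]
  · intro b hb hne
    simp only [proj, Finset.mem_inter]
    rw [if_neg]
    rintro ⟨-, hjb⟩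
    exact hne (level_unique hM (Finset.mem_range.mp hb) hk0 hjb hjk0)
  · intro h; exact absurd (Finset.mem_range.mpr hk0) h

lemma n2sq_proj {N : ℕ} (S : Finset (Fin N)) (x : Fin N → ℂ) :
    n2sq (proj S x) = ∑ j ∈ S, ‖x j‖ ^ 2 := by
  have h : ∀ j, ‖proj S x j‖ ^ 2 = if j ∈ S then ‖x j‖ ^ 2 else 0 := by
    intro j; simp only [proj]; split <;> simp
  simp only [n2sq, h, Finset.sum_ite_mem, Finset.univ_inter]

lemma n2_proj_le {N : ℕ} (S : Finset (Fin N)) (x : Fin N → ℂ) (c : ℝ) (hc : 0 ≤ c)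
    (hbd : ∀ j ∈ S, ‖x j‖ ≤ c) (b : ℕ) (hb : S.card ≤ b) :
    n2 (proj S x) ≤ Real.sqrt b * c := by
  have h1 : n2sq (proj S x) ≤ (b : ℝ) * c ^ 2 := by
    rw [n2sq_proj]
    calc ∑ j ∈ S, ‖x j‖ ^ 2 ≤ ∑ j ∈ S, c ^ 2 :=
          Finset.sum_le_sum fun j hj => pow_le_pow_left₀ (norm_nonneg _) (hbd j hj) 2
      _ = S.card * c ^ 2 := by rw [Finset.sum_const, nsmul_eq_mul]
      _ ≤ (b : ℝ) * c ^ 2 := by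
          have : (S.card : ℝ) ≤ (b : ℝ) := by exact_mod_cast hb
          nlinarith [sq_nonneg c]
  calc n2 (proj S x) ≤ Real.sqrt ((b : ℝ) * c ^ 2) := Real.sqrt_le_sqrt h1
    _ = Real.sqrt b * c := by
        rw [Real.sqrt_mul (by positivity), Real.sqrt_sq hc]

lemma sparse_of_subset_level {N r : ℕ} (M s : ℕ → ℕ) (hM : LevelsOK N r M) {i : ℕ}
    (hi : i < r) {T : Finset (Fin N)} (hT : T ⊆ level N M i) (hcard : T.card ≤ s i)
    (x : Fin N → ℂ) : Sparse r M s (proj T x) := by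
  intro k hk
  have hsupp : supp (proj T x) ⊆ T := by
    intro j hj
    simp only [supp, Finset.mem_filter, Finset.mem_univ, true_and] at hj
    by_contra h
    exact hj (by simp only [proj]; exact if_neg h)
  by_cases hki : k = i
  · subst hki
    calc (supp (proj T x) ∩ level N M k).card ≤ T.card :=
          Finset.card_le_card (le_trans (Finset.inter_subset_left) hsupp)
      _ ≤ s k := hcard
  · have : supp (proj T x) ∩ level N M k = ∅ := by
      rw [Finset.eq_empty_iff_forall_notMem]
      rintro j hj
      rw [Finset.mem_inter] at hj
      exact hki (level_unique hM hk hi hj.2 (hT (hsupp hj.1)))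
    rw [this]; simp

lemma exists_top {N : ℕ} (f : Fin N → ℝ) :
    ∀ (n : ℕ) (S : Finset (Fin N)), n ≤ S.card →
      ∃ T, T ⊆ S ∧ T.card = n ∧ ∀ t ∈ T, ∀ j ∈ S \ T, f j ≤ f t := by
  intro n
  induction n with
  | zero => intro S _; exact ⟨∅, Finset.empty_subset S, Finset.card_empty, by simp⟩
  | succ n ih =>
    intro S hS
    obtain ⟨T, hTS, hTcard, hdom⟩ := ih S (le_trans (Nat.le_succ n) hS)
    have hne : (S \ T).Nonempty := by
      rw [← Finset.card_pos, Finset.card_sdiff_of_subset hTS]; omega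
    obtain ⟨b, hb, hbmax⟩ := (S \ T).exists_max_image f hne
    refine ⟨insert b T, Finset.insert_subset (Finset.mem_sdiff.mp hb).1 hTS, ?_, ?_⟩
    · rw [Finset.card_insert_of_notMem (Finset.mem_sdiff.mp hb).2, hTcard]
    · intro t ht j hj
      have hj' : j ∈ S \ T := by
        rw [Finset.mem_sdiff] at hj ⊢
        exact ⟨hj.1, fun h => hj.2 (Finset.mem_insert_of_mem h)⟩
      rcases Finset.mem_insert.mp ht with rfl | ht
      · exact hbmax j hj'
      · exact hdom t ht j hj'

lemma rip_sqrt2 {m N : ℕ} {A : Matrix (Fin m) (Fin N) ℂ} {r : ℕ} {M s : ℕ → ℕ}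
    (hA : ricl A r M s < 1) :
    ∀ y : Fin N → ℂ, Sparse r M s y → n2 (A.mulVec y) ≤ Real.sqrt 2 * n2 y := by
  classical
  set C : ℝ := ∑ i, ∑ j, ‖A i j‖ ^ 2 with hCdef
  have hC : 0 ≤ C := by positivity
  have hub : ∀ x : Fin N → ℂ, n2sq (A.mulVec x) ≤ C * n2sq x := by
    intro x
    have h1 : ∀ i, ‖A.mulVec x i‖ ^ 2 ≤ (∑ j, ‖A i j‖ ^ 2) * n2sq x := by
      intro i
      have hrow : ‖A.mulVec x i‖ ≤ ∑ j, ‖A i j‖ * ‖x j‖ := by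
        calc ‖A.mulVec x i‖ = ‖∑ j, A i j * x j‖ := rfl
          _ ≤ ∑ j, ‖A i j * x j‖ := norm_sum_le _ _
          _ = ∑ j, ‖A i j‖ * ‖x j‖ := by simp [norm_mul]
      calc ‖A.mulVec x i‖ ^ 2 ≤ (∑ j, ‖A i j‖ * ‖x j‖) ^ 2 :=
            pow_le_pow_left₀ (norm_nonneg _) hrow 2
        _ ≤ (∑ j, ‖A i j‖ ^ 2) * (∑ j, ‖x j‖ ^ 2) :=
            Finset.sum_mul_sq_le_sq_mul_sq _ _ _
        _ = (∑ j, ‖A i j‖ ^ 2) * n2sq x := rfl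
    calc n2sq (A.mulVec x) = ∑ i, ‖A.mulVec x i‖ ^ 2 := rfl
      _ ≤ ∑ i, (∑ j, ‖A i j‖ ^ 2) * n2sq x := Finset.sum_le_sum fun i _ => h1 i
      _ = C * n2sq x := by rw [hCdef, Finset.sum_mul]
  have hmem : (1 + C) ∈ {δ : ℝ | 0 ≤ δ ∧ RIPBound A r M s δ} := by
    refine ⟨by linarith, fun x _ => ⟨?_, ?_⟩⟩
    · nlinarith [n2sq_nonneg x, n2sq_nonneg (A.mulVec x)]
    · nlinarith [hub x, n2sq_nonneg x]
  have hbdd : BddBelow {δ : ℝ | 0 ≤ δ ∧ RIPBound A r M s δ} := ⟨0, fun δ hδ => hδ.1⟩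
  obtain ⟨δ, hδmem, hδlt⟩ := (csInf_lt_iff hbdd ⟨_, hmem⟩).mp hA
  intro y hy
  have h2 : n2sq (A.mulVec y) ≤ 2 * n2sq y := by
    have := (hδmem.2 y hy).2
    nlinarith [n2sq_nonneg y]
  calc n2 (A.mulVec y) ≤ Real.sqrt (2 * n2sq y) := Real.sqrt_le_sqrt h2
    _ = Real.sqrt 2 * n2 y := by rw [Real.sqrt_mul (by norm_num)]; rfl

lemma stech {m N : ℕ} {r : ℕ} {M s : ℕ → ℕ} {A : Matrix (Fin m) (Fin N) ℂ}
    (hA2 : ∀ y : Fin N → ℂ, Sparse r M s y → n2 (A.mulVec y) ≤ Real.sqrt 2 * n2 y)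
    (hM : LevelsOK N r M) {i : ℕ} (hi : i < r) (hsi : 1 ≤ s i) (x : Fin N → ℂ) :
    ∀ (n : ℕ) (S : Finset (Fin N)) (c : ℝ), 0 ≤ c → S.card = n → S ⊆ level N M i →
      (∀ j ∈ S, ‖x j‖ ≤ c) →
      n2 (A.mulVec (proj S x)) ≤
        Real.sqrt 2 * (Real.sqrt (s i) * c + (Real.sqrt (s i))⁻¹ * ∑ j ∈ S, ‖x j‖) := by
  intro n
  induction n using Nat.strong_induction_on with
  | _ n ih =>
  intro S c hc hcard hSL hbd
  have hs0 : (0:ℝ) < Real.sqrt (s i) := Real.sqrt_pos.mpr (by exact_mod_cast hsi)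
  have hsum0 : (0:ℝ) ≤ ∑ j ∈ S, ‖x j‖ := Finset.sum_nonneg fun j _ => norm_nonneg _
  by_cases hle : S.card ≤ s i
  · have hsp := sparse_of_subset_level M s hM hi hSL hle x
    have h1 := n2_proj_le S x c hc hbd (s i) hle
    have h2 : (0:ℝ) ≤ (Real.sqrt (s i))⁻¹ * ∑ j ∈ S, ‖x j‖ := by positivity
    calc n2 (A.mulVec (proj S x)) ≤ Real.sqrt 2 * n2 (proj S x) := hA2 _ hsp
      _ ≤ Real.sqrt 2 * (Real.sqrt (s i) * c) := by
          exact mul_le_mul_of_nonneg_left h1 (Real.sqrt_nonneg 2)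
      _ ≤ _ := by nlinarith [Real.sqrt_nonneg 2]
  · push_neg at hle
    obtain ⟨T, hTS, hTcard, hdom⟩ := exists_top (fun j => ‖x j‖) (s i) S hle.le
    have hTne : T.Nonempty := Finset.card_pos.mp (by omega)
    obtain ⟨t0, ht0, ht0min⟩ := T.exists_min_image (fun j => ‖x j‖) hTne
    set c' := ‖x t0‖ with hc'def
    have hc'0 : 0 ≤ c' := norm_nonneg _
    have hc'le : ∀ j ∈ S \ T, ‖x j‖ ≤ c' := fun j hj => hdom t0 ht0 j hj
    have hsplit : proj S x = proj T x + proj (S \ T) x := by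
      funext j
      simp only [Pi.add_apply, proj, Finset.mem_sdiff]
      by_cases hjT : j ∈ T
      · have hjS := hTS hjT
        simp [hjT, hjS]
      · simp [hjT]
    have hbdT : ∀ j ∈ T, ‖x j‖ ≤ c := fun j hj => hbd j (hTS hj)
    have hspT := sparse_of_subset_level M s hM hi (hTS.trans hSL) hTcard.le x
    have hn2T : n2 (proj T x) ≤ Real.sqrt (s i) * c :=
      n2_proj_le T x c hc hbdT (s i) hTcard.le
    have hcard' : (S \ T).card < n := by
      rw [Finset.card_sdiff_of_subset hTS]; omega
    have ihh := ih _ hcard' (S \ T) c' hc'0 rfl (Finset.sdiff_subset.trans hSL) hc'le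
    have hsum : (s i : ℝ) * c' ≤ ∑ j ∈ T, ‖x j‖ := by
      calc (s i : ℝ) * c' = T.card * c' := by rw [hTcard]
        _ = ∑ _j ∈ T, c' := by rw [Finset.sum_const, nsmul_eq_mul]
        _ ≤ ∑ j ∈ T, ‖x j‖ := Finset.sum_le_sum fun j hj => ht0min j hj
    have hss : (Real.sqrt (s i))⁻¹ * (s i : ℝ) = Real.sqrt (s i) := by
      rw [← Real.mul_self_sqrt (show (0:ℝ) ≤ (s i : ℝ) by positivity)]
      field_simp
      rw [Real.sqrt_sq (Real.sqrt_nonneg _)]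
    have hkey : Real.sqrt (s i) * c' ≤ (Real.sqrt (s i))⁻¹ * ∑ j ∈ T, ‖x j‖ := by
      calc Real.sqrt (s i) * c' = (Real.sqrt (s i))⁻¹ * ((s i : ℝ) * c') := by
            rw [← mul_assoc, hss]
        _ ≤ (Real.sqrt (s i))⁻¹ * ∑ j ∈ T, ‖x j‖ :=
            mul_le_mul_of_nonneg_left hsum (by positivity)
    have hkey2 : Real.sqrt 2 * (Real.sqrt (s i) * c') ≤
        Real.sqrt 2 * ((Real.sqrt (s i))⁻¹ * ∑ j ∈ T, ‖x j‖) :=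
      mul_le_mul_of_nonneg_left hkey (Real.sqrt_nonneg 2)
    have hsdiff : ∑ j ∈ S \ T, ‖x j‖ + ∑ j ∈ T, ‖x j‖ = ∑ j ∈ S, ‖x j‖ :=
      Finset.sum_sdiff hTS
    calc n2 (A.mulVec (proj S x))
        = n2 (A.mulVec (proj T x) + A.mulVec (proj (S \ T) x)) := by
          rw [hsplit, Matrix.mulVec_add]
      _ ≤ n2 (A.mulVec (proj T x)) + n2 (A.mulVec (proj (S \ T) x)) := n2_add_le _ _
      _ ≤ Real.sqrt 2 * (Real.sqrt (s i) * c) +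
            (Real.sqrt 2 * (Real.sqrt (s i) * c' + (Real.sqrt (s i))⁻¹ * ∑ j ∈ S \ T, ‖x j‖)) := by
          refine add_le_add ?_ ihh
          exact (hA2 _ hspT).trans (mul_le_mul_of_nonneg_left hn2T (Real.sqrt_nonneg 2))
      _ ≤ _ := by
          rw [← hsdiff]
          nlinarith [hkey2, Real.sqrt_nonneg 2]

lemma level_bound {m N : ℕ} {r : ℕ} {M s : ℕ → ℕ} {A : Matrix (Fin m) (Fin N) ℂ}
    (hA2 : ∀ y : Fin N → ℂ, Sparse r M s y → n2 (A.mulVec y) ≤ Real.sqrt 2 * n2 y)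
    (hM : LevelsOK N r M) (x : Fin N → ℂ) (Δ Ξ1 : Finset (Fin N))
    (hΞ1 : IsTopSet r M s (proj (Finset.univ \ Δ) x) Ξ1)
    {i : ℕ} (hi : i < r) (hsi : 1 ≤ s i) :
    n2 (A.mulVec (proj (level N M i \ (Δ ∪ Ξ1)) x)) ≤
      Real.sqrt 2 * ((Real.sqrt (s i))⁻¹ * ∑ j ∈ level N M i \ Δ, ‖x j‖) := by
  classical
  set z := proj (Finset.univ \ Δ) x with hzdef
  set L := level N M i with hLdef
  set R := L \ (Δ ∪ Ξ1) with hRdef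
  have hzx : ∀ j : Fin N, j ∉ Δ → z j = x j := by
    intro j hj; simp [hzdef, proj, hj]
  have hRL : R ⊆ L := Finset.sdiff_subset
  have hRno : ∀ j ∈ R, j ∉ Δ ∧ j ∉ Ξ1 := by
    intro j hj
    rw [hRdef, Finset.mem_sdiff, Finset.mem_union] at hj
    exact ⟨fun h => hj.2 (Or.inl h), fun h => hj.2 (Or.inr h)⟩
  have hRHS0 : (0:ℝ) ≤ Real.sqrt 2 * ((Real.sqrt (s i))⁻¹ * ∑ j ∈ L \ Δ, ‖x j‖) := by
    have : (0:ℝ) ≤ ∑ j ∈ L \ Δ, ‖x j‖ := Finset.sum_nonneg fun j _ => norm_nonneg _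
    positivity
  have hcardB := hΞ1.1 i hi
  rw [← hLdef] at hcardB
  have hs0 : (0:ℝ) < Real.sqrt (s i) := Real.sqrt_pos.mpr (by exact_mod_cast hsi)
  by_cases hsmall : L.card < s i
  · -- degenerate: the whole level is inside Ξ1
    have hmin : min (s i) L.card = L.card := by omega
    have hBL : Ξ1 ∩ L = L := Finset.eq_of_subset_of_card_le Finset.inter_subset_right
      (by rw [hcardB, hmin])
    have hRempty : R = ∅ := by
      rw [Finset.eq_empty_iff_forall_notMem]
      intro j hj
      have hjL := hRL hj
      have : j ∈ Ξ1 ∩ L := by rw [hBL]; exact hjL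
      exact (hRno j hj).2 (Finset.mem_inter.mp this).1
    rw [hRempty]
    have : proj (∅ : Finset (Fin N)) x = 0 := by funext j; simp [proj]
    rw [this, Matrix.mulVec_zero, n2_zero]
    exact hRHS0
  · push_neg at hsmall
    have hcardB' : (Ξ1 ∩ L).card = s i := by rw [hcardB]; omega
    by_cases hBΔ : ∃ t ∈ Ξ1 ∩ L, t ∈ Δ
    · -- degenerate: x vanishes on R
      obtain ⟨t, htB, htΔ⟩ := hBΔ
      have hzt : z t = 0 := by simp [hzdef, proj, htΔ]
      have hx0 : ∀ j ∈ R, x j = 0 := by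
        intro j hj
        have hjmem : j ∈ L \ Ξ1 := Finset.mem_sdiff.mpr ⟨hRL hj, (hRno j hj).2⟩
        have := hΞ1.2 i hi t htB j hjmem
        rw [hzt, norm_zero] at this
        rw [← hzx j (hRno j hj).1]
        exact norm_le_zero_iff.mp this
      have : proj R x = 0 := by
        funext j
        simp only [proj]
        split
        · next h => exact hx0 j h
        · rfl
      rw [this, Matrix.mulVec_zero, n2_zero]
      exact hRHS0
    · -- good case
      push_neg at hBΔ
      set B := Ξ1 ∩ L with hBdef
      have hBne : B.Nonempty := Finset.card_pos.mp (by rw [hcardB']; omega)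
      obtain ⟨t0, ht0, ht0min⟩ := B.exists_min_image (fun j => ‖x j‖) hBne
      set c := ‖x t0‖ with hcdef
      have hc0 : 0 ≤ c := norm_nonneg _
      have hbd : ∀ j ∈ R, ‖x j‖ ≤ c := by
        intro j hj
        have hjmem : j ∈ L \ Ξ1 := Finset.mem_sdiff.mpr ⟨hRL hj, (hRno j hj).2⟩
        have := hΞ1.2 i hi t0 ht0 j hjmem
        rw [hzx j (hRno j hj).1, hzx t0 (hBΔ t0 ht0)] at this
        exact this
      have hmain := stech hA2 hM hi hsi x R.card R c hc0 rfl hRL hbd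
      have hsum : (s i : ℝ) * c ≤ ∑ j ∈ B, ‖x j‖ := by
        calc (s i : ℝ) * c = B.card * c := by rw [hcardB']
          _ = ∑ _j ∈ B, c := by rw [Finset.sum_const, nsmul_eq_mul]
          _ ≤ ∑ j ∈ B, ‖x j‖ := Finset.sum_le_sum fun j hj => ht0min j hj
      have hss : (Real.sqrt (s i))⁻¹ * (s i : ℝ) = Real.sqrt (s i) := by
        rw [← Real.mul_self_sqrt (show (0:ℝ) ≤ (s i : ℝ) by positivity)]
        field_simp
        rw [Real.sqrt_sq (Real.sqrt_nonneg _)]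
      have hkey : Real.sqrt (s i) * c ≤ (Real.sqrt (s i))⁻¹ * ∑ j ∈ B, ‖x j‖ := by
        calc Real.sqrt (s i) * c = (Real.sqrt (s i))⁻¹ * ((s i : ℝ) * c) := by
              rw [← mul_assoc, hss]
          _ ≤ (Real.sqrt (s i))⁻¹ * ∑ j ∈ B, ‖x j‖ :=
              mul_le_mul_of_nonneg_left hsum (by positivity)
      have hdisj : Disjoint B R := by
        rw [Finset.disjoint_left]
        intro j hjB hjR
        exact (hRno j hjR).2 (Finset.mem_inter.mp hjB).1
      have hsub : B ∪ R ⊆ L \ Δ := by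
        intro j hj
        rcases Finset.mem_union.mp hj with h | h
        · exact Finset.mem_sdiff.mpr ⟨(Finset.mem_inter.mp h).2, hBΔ j h⟩
        · exact Finset.mem_sdiff.mpr ⟨hRL h, (hRno j h).1⟩
      have hsums : ∑ j ∈ B, ‖x j‖ + ∑ j ∈ R, ‖x j‖ ≤ ∑ j ∈ L \ Δ, ‖x j‖ := by
        rw [← Finset.sum_union hdisj]
        exact Finset.sum_le_sum_of_subset_of_nonneg hsub fun j _ _ => norm_nonneg _
      calc n2 (A.mulVec (proj R x))
          ≤ Real.sqrt 2 * (Real.sqrt (s i) * c + (Real.sqrt (s i))⁻¹ * ∑ j ∈ R, ‖x j‖) := hmain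
        _ ≤ Real.sqrt 2 * ((Real.sqrt (s i))⁻¹ * ∑ j ∈ B, ‖x j‖ +
              (Real.sqrt (s i))⁻¹ * ∑ j ∈ R, ‖x j‖) := by
            refine mul_le_mul_of_nonneg_left ?_ (Real.sqrt_nonneg 2)
            exact add_le_add_left hkey _
        _ = Real.sqrt 2 * ((Real.sqrt (s i))⁻¹ * (∑ j ∈ B, ‖x j‖ + ∑ j ∈ R, ‖x j‖)) := by ring
        _ ≤ Real.sqrt 2 * ((Real.sqrt (s i))⁻¹ * ∑ j ∈ L \ Δ, ‖x j‖) := by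
            refine mul_le_mul_of_nonneg_left ?_ (Real.sqrt_nonneg 2)
            exact mul_le_mul_of_nonneg_left hsums (by positivity)


set_option maxHeartbeats 1000000 in
/-- with `Δ` a best `(s,M)`-term approximation support, `Ξ¹` the per-level
top-`s` set of `P_{Δᶜ}x`, and `δ_{s,M} < 1`, one has
`‖A P_{(Δ ∪ Ξ¹)ᶜ} x + e‖₂ ≤ (√2/√ξ) σ_{s,M}(x)_{ℓ¹_w} + ‖e‖₂`. -/
theorem stmt6 {m N : ℕ} (r : ℕ) (M s : ℕ → ℕ) (hM : LevelsOK N r M) (hr : 0 < r)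
    (hs : ∀ k < r, 1 ≤ s k)
    (w : Fin N → ℝ) (wl : ℕ → ℝ) (hwpos : ∀ k < r, 0 < wl k)
    (hw : ∀ k < r, ∀ i ∈ level N M k, w i = wl k)
    (A : Matrix (Fin m) (Fin N) ℂ) (hA : ricl A r M s < 1)
    (x : Fin N → ℂ) (e : Fin m → ℂ)
    (Δ : Finset (Fin N)) (hΔ : SparseSet N r M s Δ)
    (hbest : wn1 w (x - proj Δ x) = bestApprox r M s w x)
    (Ξ1 : Finset (Fin N)) (hΞ1 : IsTopSet r M s (proj (Finset.univ \ Δ) x) Ξ1) :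
    n2 (A.mulVec (proj (Finset.univ \ (Δ ∪ Ξ1)) x) + e) ≤
      (Real.sqrt 2 / Real.sqrt (xiMin r s wl)) * bestApprox r M s w x + n2 e := by
  classical
  have hA2 := rip_sqrt2 hA
  have hrne : (Finset.range r).Nonempty := ⟨0, Finset.mem_range.mpr hr⟩
  have hxidef : xiMin r s wl = (Finset.range r).inf' hrne (fun k => wl k ^ 2 * (s k : ℝ)) := by
    rw [xiMin, dif_pos hrne]
  have hxipos : 0 < xiMin r s wl := by
    rw [hxidef]
    obtain ⟨k, hk, hkeq⟩ := Finset.exists_mem_eq_inf' hrne (fun k => wl k ^ 2 * (s k : ℝ))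
    rw [hkeq]
    have h1 := hwpos k (Finset.mem_range.mp hk)
    have h2 := hs k (Finset.mem_range.mp hk)
    have h3 : (0:ℝ) < (s k : ℝ) := by exact_mod_cast h2
    positivity
  have hxile : ∀ k, k < r → Real.sqrt (xiMin r s wl) ≤ wl k * Real.sqrt (s k) := by
    intro k hk
    have h1 : xiMin r s wl ≤ wl k ^ 2 * (s k : ℝ) := by
      rw [hxidef]; exact Finset.inf'_le _ (Finset.mem_range.mpr hk)
    calc Real.sqrt (xiMin r s wl) ≤ Real.sqrt (wl k ^ 2 * (s k : ℝ)) := Real.sqrt_le_sqrt h1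
      _ = wl k * Real.sqrt (s k) := by
          rw [Real.sqrt_mul (sq_nonneg _), Real.sqrt_sq (hwpos k hk).le]
  have hσ : bestApprox r M s w x =
      ∑ k ∈ Finset.range r, ∑ j ∈ level N M k \ Δ, wl k * ‖x j‖ := by
    rw [← hbest, wn1, sum_levels hM]
    refine Finset.sum_congr rfl fun k hk => ?_
    have hkr := Finset.mem_range.mp hk
    have h0 : ∀ j ∈ level N M k, j ∉ level N M k \ Δ → w j * ‖(x - proj Δ x) j‖ = 0 := by
      intro j hj hj'
      have hjΔ : j ∈ Δ := by
        by_contra h; exact hj' (Finset.mem_sdiff.mpr ⟨hj, h⟩)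
      simp [proj, hjΔ]
    rw [← Finset.sum_subset Finset.sdiff_subset h0]
    refine Finset.sum_congr rfl fun j hj => ?_
    rw [Finset.mem_sdiff] at hj
    rw [hw k hkr j hj.1]
    congr 1
    simp [proj, hj.2]
  set U := Finset.univ \ (Δ ∪ Ξ1) with hUdef
  have hUk : ∀ k, U ∩ level N M k = level N M k \ (Δ ∪ Ξ1) := by
    intro k; ext j
    simp only [hUdef, Finset.mem_sdiff, Finset.mem_inter, Finset.mem_univ, true_and]
    tauto
  have hdec : proj U x = ∑ k ∈ Finset.range r, proj (level N M k \ (Δ ∪ Ξ1)) x := by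
    rw [proj_decomp hM U x]
    exact Finset.sum_congr rfl fun k _ => by rw [hUk]
  have hstep2 : n2 (A.mulVec (proj U x)) ≤
      ∑ k ∈ Finset.range r, n2 (A.mulVec (proj (level N M k \ (Δ ∪ Ξ1)) x)) := by
    rw [hdec]
    calc n2 (A.mulVec (∑ k ∈ Finset.range r, proj (level N M k \ (Δ ∪ Ξ1)) x))
        = n2 (∑ k ∈ Finset.range r, A.mulVec (proj (level N M k \ (Δ ∪ Ξ1)) x)) := by
          simp only [← Matrix.mulVecLin_apply, map_sum]
      _ ≤ _ := n2_sum_le _ _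
  have hstep3 : ∀ k ∈ Finset.range r,
      n2 (A.mulVec (proj (level N M k \ (Δ ∪ Ξ1)) x)) ≤
      (Real.sqrt 2 / Real.sqrt (xiMin r s wl)) * ∑ j ∈ level N M k \ Δ, wl k * ‖x j‖ := by
    intro k hk
    have hkr := Finset.mem_range.mp hk
    have hlb := level_bound hA2 hM x Δ Ξ1 hΞ1 hkr (hs k hkr)
    refine hlb.trans ?_
    set T := ∑ j ∈ level N M k \ Δ, ‖x j‖ with hTdef
    have hT0 : (0:ℝ) ≤ T := Finset.sum_nonneg fun j _ => norm_nonneg _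
    have hwk := hwpos k hkr
    have hsql := hxile k hkr
    have hsq0 : 0 < Real.sqrt (xiMin r s wl) := Real.sqrt_pos.mpr hxipos
    have hsk0 : (0:ℝ) < Real.sqrt (s k) := Real.sqrt_pos.mpr (by exact_mod_cast hs k hkr)
    have hmulsum : ∑ j ∈ level N M k \ Δ, wl k * ‖x j‖ = wl k * T := by
      rw [hTdef, Finset.mul_sum]
    rw [hmulsum]
    have hnum0 : (0:ℝ) ≤ Real.sqrt 2 * (wl k * T) := by positivity
    calc Real.sqrt 2 * ((Real.sqrt (s k))⁻¹ * T)
        = (Real.sqrt 2 * (wl k * T)) / (wl k * Real.sqrt (s k)) := by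
          field_simp
      _ ≤ (Real.sqrt 2 * (wl k * T)) / Real.sqrt (xiMin r s wl) := by
          gcongr
      _ = Real.sqrt 2 / Real.sqrt (xiMin r s wl) * (wl k * T) := by ring
  calc n2 (A.mulVec (proj U x) + e) ≤ n2 (A.mulVec (proj U x)) + n2 e := n2_add_le _ _
    _ ≤ (∑ k ∈ Finset.range r, n2 (A.mulVec (proj (level N M k \ (Δ ∪ Ξ1)) x))) + n2 e :=
        add_le_add_left hstep2 _
    _ ≤ (∑ k ∈ Finset.range r, (Real.sqrt 2 / Real.sqrt (xiMin r s wl)) *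
          ∑ j ∈ level N M k \ Δ, wl k * ‖x j‖) + n2 e :=
        add_le_add_left (Finset.sum_le_sum hstep3) _
    _ = (Real.sqrt 2 / Real.sqrt (xiMin r s wl)) *
          (∑ k ∈ Finset.range r, ∑ j ∈ level N M k \ Δ, wl k * ‖x j‖) + n2 e := by
        rw [← Finset.mul_sum]
    _ = (Real.sqrt 2 / Real.sqrt (xiMin r s wl)) * bestApprox r M s w x + n2 e := by rw [hσ]


end SIL
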